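/- Consider the equilateral triangle with vertices A = (0,0), B = (1,0), C = (1/2, √3/2). Subdivide it using the parameters α = β = γ = 1 - √3/3 and interior point M = (1/3)(B) + (1/3)(C) as in the construction: C' = α·B on edge AB, A' = (1-γ)B + γC on edge BC, B' = (1-β)C on edge CA, and M = ξB + ηC with ξ = η = 1/3. Then the three quadrangles AC'MB', BA'MC', CB'MA' each have area (√3/4)/3 and each have perimeter 1 + √2 - √6/3. -/

import Mathlib

/-!
The centroid `M` is the centre of the rotation by `2π/3` that maps `A ↦ B ↦ C` and
`C' ↦ A' ↦ B'`, so it carries the quadrangle `AC'MB'` onto `BA'MC'` and that one onto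
`CB'MA'`. Rotations preserve distances and the shoelace area, so the three quadrangles share
area and perimeter, and it suffices to compute them for `AC'MB'`: its sides are `1 - √3/3`,
`√3/3` and twice `(√2/2)(1 - √3/3)`.
-/

/-- Perimeter of a quadrangle with vertices p, q, r, s in cyclic order. -/
noncomputable def quadPerimeter (p q r s : EuclideanSpace ℝ (Fin 2)) : ℝ :=
  dist p q + dist q r + dist r s + dist s p

/-- Area (shoelace formula) of a quadrangle with vertices p, q, r, s in cyclic order. -/
noncomputable def quadArea (p q r s : EuclideanSpace ℝ (Fin 2)) : ℝ :=
  (1/2) * |(p 0 * q 1 - q 0 * p 1) + (q 0 * r 1 - r 0 * q 1) +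
            (r 0 * s 1 - s 0 * r 1) + (s 0 * p 1 - p 0 * s 1)|

open Real

theorem dist_eq_sqrt_fin_two (x y : EuclideanSpace ℝ (Fin 2)) :
    dist x y = √((x 0 - y 0) ^ 2 + (x 1 - y 1) ^ 2) := by
  rw [EuclideanSpace.dist_eq, Fin.sum_univ_two, Real.dist_eq, Real.dist_eq, sq_abs, sq_abs]

theorem dist_eq_of_sq_fin_two {x y : EuclideanSpace ℝ (Fin 2)} {d : ℝ} (hd : 0 ≤ d)
    (h : (x 0 - y 0) ^ 2 + (x 1 - y 1) ^ 2 = d ^ 2) : dist x y = d := by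
  rw [dist_eq_sqrt_fin_two, h, sqrt_sq hd]

noncomputable def rotateAbout (c : EuclideanSpace ℝ (Fin 2)) (θ : ℝ)
    (x : EuclideanSpace ℝ (Fin 2)) : EuclideanSpace ℝ (Fin 2) :=
  !₂[c 0 + cos θ * (x 0 - c 0) - sin θ * (x 1 - c 1),
     c 1 + sin θ * (x 0 - c 0) + cos θ * (x 1 - c 1)]

section rotateAbout

variable (c : EuclideanSpace ℝ (Fin 2)) (θ : ℝ)

@[simp] theorem rotateAbout_apply_zero (x : EuclideanSpace ℝ (Fin 2)) :
    rotateAbout c θ x 0 = c 0 + cos θ * (x 0 - c 0) - sin θ * (x 1 - c 1) := rfl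

@[simp] theorem rotateAbout_apply_one (x : EuclideanSpace ℝ (Fin 2)) :
    rotateAbout c θ x 1 = c 1 + sin θ * (x 0 - c 0) + cos θ * (x 1 - c 1) := rfl

theorem dist_rotateAbout (x y : EuclideanSpace ℝ (Fin 2)) :
    dist (rotateAbout c θ x) (rotateAbout c θ y) = dist x y := by
  simp only [dist_eq_sqrt_fin_two, rotateAbout_apply_zero, rotateAbout_apply_one]
  congr 1
  linear_combination ((x 0 - y 0) ^ 2 + (x 1 - y 1) ^ 2) * sin_sq_add_cos_sq θ

theorem quadPerimeter_rotateAbout (p q r s : EuclideanSpace ℝ (Fin 2)) :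
    quadPerimeter (rotateAbout c θ p) (rotateAbout c θ q) (rotateAbout c θ r)
      (rotateAbout c θ s) = quadPerimeter p q r s := by
  simp only [quadPerimeter, dist_rotateAbout]

-- The shoelace sum of a closed polygon is translation invariant, and the linear part of the
-- rotation has determinant `cos² θ + sin² θ = 1`.
theorem quadArea_rotateAbout (p q r s : EuclideanSpace ℝ (Fin 2)) :
    quadArea (rotateAbout c θ p) (rotateAbout c θ q) (rotateAbout c θ r)
      (rotateAbout c θ s) = quadArea p q r s := by
  simp only [quadArea, rotateAbout_apply_zero, rotateAbout_apply_one]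
  congr 2
  linear_combination ((p 0 * q 1 - q 0 * p 1) + (q 0 * r 1 - r 0 * q 1) +
    (r 0 * s 1 - s 0 * r 1) + (s 0 * p 1 - p 0 * s 1)) * sin_sq_add_cos_sq θ

end rotateAbout

theorem ext_fin_two {x y : EuclideanSpace ℝ (Fin 2)} (h₀ : x 0 = y 0) (h₁ : x 1 = y 1) :
    x = y := by
  ext i
  fin_cases i
  exacts [h₀, h₁]

theorem cos_two_pi_div_three : cos (2 * π / 3) = -1 / 2 := by
  rw [show 2 * π / 3 = π - π / 3 by ring, cos_pi_sub, cos_pi_div_three]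
  norm_num

theorem sin_two_pi_div_three : sin (2 * π / 3) = √3 / 2 := by
  rw [show 2 * π / 3 = π - π / 3 by ring, sin_pi_sub, sin_pi_div_three]

namespace FairSubdivision

noncomputable def A : EuclideanSpace ℝ (Fin 2) := !₂[0, 0]
noncomputable def B : EuclideanSpace ℝ (Fin 2) := !₂[1, 0]
noncomputable def C : EuclideanSpace ℝ (Fin 2) := !₂[1 / 2, √3 / 2]
noncomputable def C' : EuclideanSpace ℝ (Fin 2) := !₂[1 - √3 / 3, 0]
noncomputable def A' : EuclideanSpace ℝ (Fin 2) := !₂[1 / 2 + √3 / 6, √3 / 2 - 1 / 2]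
noncomputable def B' : EuclideanSpace ℝ (Fin 2) := !₂[√3 / 6, 1 / 2]
noncomputable def M : EuclideanSpace ℝ (Fin 2) := !₂[1 / 2, √3 / 6]

noncomputable abbrev rot : EuclideanSpace ℝ (Fin 2) → EuclideanSpace ℝ (Fin 2) :=
  rotateAbout M (2 * π / 3)

theorem sqrt_three_sq : √3 ^ 2 = 3 := sq_sqrt (by norm_num)

theorem C'_eq : C' = (1 - √3 / 3) • B := by
  refine ext_fin_two ?_ ?_ <;>
    simp only [C', B, PiLp.smul_apply, smul_eq_mul,
      Matrix.cons_val_zero, Matrix.cons_val_one, Matrix.cons_val_fin_one] <;>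
    ring

theorem A'_eq : A' = (1 - (1 - √3 / 3)) • B + (1 - √3 / 3) • C := by
  refine ext_fin_two ?_ ?_ <;>
    simp only [A', B, C, PiLp.add_apply, PiLp.smul_apply, smul_eq_mul,
      Matrix.cons_val_zero, Matrix.cons_val_one, Matrix.cons_val_fin_one] <;>
    linarith [sqrt_three_sq]

theorem B'_eq : B' = (1 - (1 - √3 / 3)) • C := by
  refine ext_fin_two ?_ ?_ <;>
    simp only [B', C, PiLp.smul_apply, smul_eq_mul,
      Matrix.cons_val_zero, Matrix.cons_val_one, Matrix.cons_val_fin_one] <;>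
    linarith [sqrt_three_sq]

theorem M_eq : M = (1 / 3 : ℝ) • B + (1 / 3 : ℝ) • C := by
  refine ext_fin_two ?_ ?_ <;>
    simp only [M, B, C, PiLp.add_apply, PiLp.smul_apply, smul_eq_mul,
      Matrix.cons_val_zero, Matrix.cons_val_one, Matrix.cons_val_fin_one] <;>
    ring

theorem rot_A : rot A = B := by
  refine ext_fin_two ?_ ?_ <;>
    simp only [A, B, M, rotateAbout_apply_zero, rotateAbout_apply_one, cos_two_pi_div_three,
      sin_two_pi_div_three, Matrix.cons_val_zero, Matrix.cons_val_one,
      Matrix.cons_val_fin_one] <;>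
    linarith [sqrt_three_sq]

theorem rot_B : rot B = C := by
  refine ext_fin_two ?_ ?_ <;>
    simp only [B, C, M, rotateAbout_apply_zero, rotateAbout_apply_one, cos_two_pi_div_three,
      sin_two_pi_div_three, Matrix.cons_val_zero, Matrix.cons_val_one,
      Matrix.cons_val_fin_one] <;>
    linarith [sqrt_three_sq]

theorem rot_C' : rot C' = A' := by
  refine ext_fin_two ?_ ?_ <;>
    simp only [C', A', M, rotateAbout_apply_zero, rotateAbout_apply_one, cos_two_pi_div_three,
      sin_two_pi_div_three, Matrix.cons_val_zero, Matrix.cons_val_one,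
      Matrix.cons_val_fin_one] <;>
    linarith [sqrt_three_sq]

theorem rot_A' : rot A' = B' := by
  refine ext_fin_two ?_ ?_ <;>
    simp only [A', B', M, rotateAbout_apply_zero, rotateAbout_apply_one, cos_two_pi_div_three,
      sin_two_pi_div_three, Matrix.cons_val_zero, Matrix.cons_val_one,
      Matrix.cons_val_fin_one] <;>
    linarith [sqrt_three_sq]

theorem rot_B' : rot B' = C' := by
  refine ext_fin_two ?_ ?_ <;>
    simp only [B', C', M, rotateAbout_apply_zero, rotateAbout_apply_one, cos_two_pi_div_three,
      sin_two_pi_div_three, Matrix.cons_val_zero, Matrix.cons_val_one,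
      Matrix.cons_val_fin_one] <;>
    linarith [sqrt_three_sq]

theorem rot_M : rot M = M :=
  ext_fin_two (by simp only [rotateAbout_apply_zero, sub_self, mul_zero, add_zero, sub_zero])
    (by simp only [rotateAbout_apply_one, sub_self, mul_zero, add_zero])

theorem quadArea_AC'MB' : quadArea A C' M B' = (√3 / 4) / 3 := by
  simp only [quadArea, A, C', M, B', Matrix.cons_val_zero, Matrix.cons_val_one,
    Matrix.cons_val_fin_one]
  rw [abs_of_nonneg (by nlinarith [sqrt_three_sq, sqrt_nonneg 3])]
  linear_combination (-1 / 24) * sqrt_three_sq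

theorem quadPerimeter_AC'MB' : quadPerimeter A C' M B' = 1 + √2 - √6 / 3 := by
  have h3 : 0 ≤ 1 - √3 / 3 := by nlinarith [sqrt_three_sq, sqrt_nonneg 3]
  have h2 : √2 ^ 2 = 2 := sq_sqrt (by norm_num)
  have hMC' : 0 ≤ √2 / 2 * (1 - √3 / 3) := mul_nonneg (by positivity) h3
  have hAC' : dist A C' = 1 - √3 / 3 :=
    dist_eq_of_sq_fin_two h3 (by
      simp only [A, C', Matrix.cons_val_zero, Matrix.cons_val_one, Matrix.cons_val_fin_one]
      ring)
  have hC'M : dist C' M = √2 / 2 * (1 - √3 / 3) :=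
    dist_eq_of_sq_fin_two hMC' (by
      simp only [C', M, Matrix.cons_val_zero, Matrix.cons_val_one, Matrix.cons_val_fin_one]
      linear_combination (1 / 12) * sqrt_three_sq - (1 / 4) * (1 - √3 / 3) ^ 2 * h2)
  have hMB' : dist M B' = √2 / 2 * (1 - √3 / 3) :=
    dist_eq_of_sq_fin_two hMC' (by
      simp only [M, B', Matrix.cons_val_zero, Matrix.cons_val_one, Matrix.cons_val_fin_one]
      linear_combination (-1 / 4) * (1 - √3 / 3) ^ 2 * h2)
  have hB'A : dist B' A = √3 / 3 :=
    dist_eq_of_sq_fin_two (by positivity) (by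
      simp only [B', A, Matrix.cons_val_zero, Matrix.cons_val_one, Matrix.cons_val_fin_one]
      linear_combination (-1 / 12) * sqrt_three_sq)
  rw [quadPerimeter, hAC', hC'M, hMB', hB'A, show (6 : ℝ) = 2 * 3 by norm_num,
    sqrt_mul (by norm_num)]
  ring

theorem quadArea_BA'MC' : quadArea B A' M C' = quadArea A C' M B' := by
  simpa only [rot_A, rot_C', rot_M, rot_B'] using quadArea_rotateAbout M (2 * π / 3) A C' M B'

theorem quadArea_CB'MA' : quadArea C B' M A' = quadArea B A' M C' := by
  simpa only [rot_B, rot_A', rot_M, rot_C'] using quadArea_rotateAbout M (2 * π / 3) B A' M C'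

theorem quadPerimeter_BA'MC' : quadPerimeter B A' M C' = quadPerimeter A C' M B' := by
  simpa only [rot_A, rot_C', rot_M, rot_B'] using
    quadPerimeter_rotateAbout M (2 * π / 3) A C' M B'

theorem quadPerimeter_CB'MA' : quadPerimeter C B' M A' = quadPerimeter B A' M C' := by
  simpa only [rot_B, rot_A', rot_M, rot_C'] using
    quadPerimeter_rotateAbout M (2 * π / 3) B A' M C'

end FairSubdivision

/-- the three quadrangles of the fair subdivision of the unit equilateral
triangle all have area (√3/4)/3 and perimeter 1 + √2 - √6/3. -/
theorem stmt_13
    (A B C C' A' B' M : EuclideanSpace ℝ (Fin 2))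
    (hA : A = !₂[0, 0]) (hB : B = !₂[1, 0]) (hC : C = !₂[1/2, Real.sqrt 3 / 2])
    (hC' : C' = (1 - Real.sqrt 3 / 3) • B)
    (hA' : A' = (1 - (1 - Real.sqrt 3 / 3)) • B + (1 - Real.sqrt 3 / 3) • C)
    (hB' : B' = (1 - (1 - Real.sqrt 3 / 3)) • C)
    (hM : M = (1/3 : ℝ) • B + (1/3 : ℝ) • C) :
    (quadArea A C' M B' = (Real.sqrt 3 / 4) / 3 ∧
     quadArea B A' M C' = (Real.sqrt 3 / 4) / 3 ∧
     quadArea C B' M A' = (Real.sqrt 3 / 4) / 3) ∧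
    (quadPerimeter A C' M B' = 1 + Real.sqrt 2 - Real.sqrt 6 / 3 ∧
     quadPerimeter B A' M C' = 1 + Real.sqrt 2 - Real.sqrt 6 / 3 ∧
     quadPerimeter C B' M A' = 1 + Real.sqrt 2 - Real.sqrt 6 / 3) := by
  obtain rfl : A = FairSubdivision.A := hA
  obtain rfl : B = FairSubdivision.B := hB
  obtain rfl : C = FairSubdivision.C := hC
  obtain rfl : C' = FairSubdivision.C' := hC'.trans FairSubdivision.C'_eq.symm
  obtain rfl : A' = FairSubdivision.A' := hA'.trans FairSubdivision.A'_eq.symm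
  obtain rfl : B' = FairSubdivision.B' := hB'.trans FairSubdivision.B'_eq.symm
  obtain rfl : M = FairSubdivision.M := hM.trans FairSubdivision.M_eq.symm
  simp only [FairSubdivision.quadArea_CB'MA', FairSubdivision.quadArea_BA'MC',
    FairSubdivision.quadPerimeter_CB'MA', FairSubdivision.quadPerimeter_BA'MC',
    FairSubdivision.quadArea_AC'MB', FairSubdivision.quadPerimeter_AC'MB', and_self]
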